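/- Let (X,η) be a field configuration of the Poisson sigma model, defined and smooth on an open neighborhood of the closed unit square Q = [0,1]², satisfying both equations of motion (E1) and (E2) there, and satisfying the tangential boundary conditions on Q. Then for every smooth vector field A : ℝⁿ → ℝⁿ one has ∫_Q Σ_{μ,ν,λ} ( α^{λν} ∂_λ A^μ − α^{λμ} ∂_λ A^ν − A^λ ∂_λ α^{μν} )(X(u)) · η_{μ1}(u) η_{ν2}(u) du = 0. (This is the disk/sphere case: for solutions with η vanishing tangentially along the boundary, the pairing of a Schouten-exact bivector with the solution vanishes.) -/

import Mathlib

open MeasureTheory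

noncomputable def pd (i : Fin 2) (g : ℝ × ℝ → ℝ) (p : ℝ × ℝ) : ℝ :=
  fderiv ℝ g p (if i = 0 then ((1 : ℝ), (0 : ℝ)) else ((0 : ℝ), (1 : ℝ)))

noncomputable def pdn {n : ℕ} (lam : Fin n) (g : (Fin n → ℝ) → ℝ) (x : Fin n → ℝ) : ℝ :=
  fderiv ℝ g x (Pi.single lam 1)

lemma hasDerivAt_pd0 (g : ℝ × ℝ → ℝ) (x y : ℝ) (hg : DifferentiableAt ℝ g (x, y)) :
    HasDerivAt (fun t => g (t, y)) (pd 0 g (x, y)) x := by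
  have hc : HasDerivAt (fun t : ℝ => (t, y)) ((1:ℝ), (0:ℝ)) x :=
    (hasDerivAt_id x).prodMk (hasDerivAt_const x y)
  have := hg.hasFDerivAt.comp_hasDerivAt x hc
  simp only [pd]
  exact this

lemma hasDerivAt_pd1 (g : ℝ × ℝ → ℝ) (x y : ℝ) (hg : DifferentiableAt ℝ g (x, y)) :
    HasDerivAt (fun t => g (x, t)) (pd 1 g (x, y)) y := by
  have hc : HasDerivAt (fun t : ℝ => ((x:ℝ), t)) ((0:ℝ), (1:ℝ)) y :=
    (hasDerivAt_const y x).prodMk (hasDerivAt_id y)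
  have := hg.hasFDerivAt.comp_hasDerivAt y hc
  simp only [pd]
  exact this

lemma pd_sum {ι : Type*} (s : Finset ι) (f : ι → ℝ × ℝ → ℝ) (p : ℝ × ℝ) (i : Fin 2)
    (hf : ∀ j ∈ s, DifferentiableAt ℝ (f j) p) :
    pd i (fun q => ∑ j ∈ s, f j q) p = ∑ j ∈ s, pd i (f j) p := by
  simp [pd, fderiv_fun_sum hf, ContinuousLinearMap.sum_apply]

lemma pd_mul (f g : ℝ × ℝ → ℝ) (p : ℝ × ℝ) (i : Fin 2)
    (hf : DifferentiableAt ℝ f p) (hg : DifferentiableAt ℝ g p) :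
    pd i (fun q => f q * g q) p = pd i f p * g p + f p * pd i g p := by
  simp only [pd, fderiv_fun_mul hf hg, ContinuousLinearMap.add_apply,
    ContinuousLinearMap.smul_apply, smul_eq_mul]
  ring

lemma pd_comp {n : ℕ} (F : (Fin n → ℝ) → ℝ) (X : ℝ × ℝ → Fin n → ℝ) (p : ℝ × ℝ) (i : Fin 2)
    (hF : DifferentiableAt ℝ F (X p)) (hX : DifferentiableAt ℝ X p) :
    pd i (fun q => F (X q)) p = ∑ lam, pdn lam F (X p) * pd i (fun q => X q lam) p := by
  classical
  set e : ℝ × ℝ := if i = 0 then ((1:ℝ),(0:ℝ)) else ((0:ℝ),(1:ℝ)) with he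
  set L := fderiv ℝ F (X p) with hL
  set D := fderiv ℝ X p with hD
  have hcomp : fderiv ℝ (fun q => F (X q)) p = L.comp D := fderiv_comp p hF hX
  have hvlam : ∀ lam : Fin n, D e lam = pd i (fun q => X q lam) p := by
    intro lam
    have h1 : fderiv ℝ (fun q => X q lam) p
        = (ContinuousLinearMap.proj lam : ((Fin n → ℝ)) →L[ℝ] ℝ).comp D := by
      have h2 := fderiv_comp (g := fun f : Fin n → ℝ => f lam) p
        ((ContinuousLinearMap.proj lam : ((Fin n → ℝ)) →L[ℝ] ℝ).differentiableAt) hX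
      have h3 : fderiv ℝ (fun f : Fin n → ℝ => f lam) (X p)
          = (ContinuousLinearMap.proj lam : ((Fin n → ℝ)) →L[ℝ] ℝ) :=
        (ContinuousLinearMap.proj lam : ((Fin n → ℝ)) →L[ℝ] ℝ).fderiv
      rw [h3] at h2
      exact h2
    simp [pd, h1, ← he, ContinuousLinearMap.comp_apply]
  have hv : D e = ∑ lam, (D e lam) • (Pi.single lam 1 : Fin n → ℝ) := by
    funext j
    simp [Finset.sum_apply, Pi.single_apply]
  have : pd i (fun q => F (X q)) p = L (D e) := by
    rw [pd, hcomp]; rfl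
  rw [this, hv, map_sum]
  refine Finset.sum_congr rfl fun lam _ => ?_
  rw [L.map_smul, smul_eq_mul, hvlam lam, pdn, ← hL]
  ring

lemma sum3_cyc {M : Type*} [AddCommMonoid M] {n : ℕ} (f : Fin n → Fin n → Fin n → M) :
    ∑ x, ∑ y, ∑ z, f x y z = ∑ y, ∑ z, ∑ x, f x y z := by
  rw [Finset.sum_comm]
  exact Finset.sum_congr rfl fun y _ => Finset.sum_comm

lemma sum3_cyc2 {M : Type*} [AddCommMonoid M] {n : ℕ} (f : Fin n → Fin n → Fin n → M) :
    ∑ x, ∑ y, ∑ z, f x y z = ∑ z, ∑ x, ∑ y, f x y z := by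
  rw [sum3_cyc]
  exact sum3_cyc (fun a b c => f c a b)

noncomputable def Lag {n : ℕ} (α : (Fin n → ℝ) → Fin n → Fin n → ℝ)
    (X : ℝ × ℝ → Fin n → ℝ) (η : ℝ × ℝ → Fin n → Fin 2 → ℝ) (p : ℝ × ℝ) : ℝ :=
  (∑ μ, (η p μ 0 * pd 1 (fun q => X q μ) p - η p μ 1 * pd 0 (fun q => X q μ) p))
    + ∑ μ, ∑ ν, α (X p) μ ν * η p μ 0 * η p ν 1

noncomputable def gfun {n : ℕ} (A : (Fin n → ℝ) → Fin n → ℝ)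
    (X : ℝ × ℝ → Fin n → ℝ) (η : ℝ × ℝ → Fin n → Fin 2 → ℝ) (j : Fin 2) : ℝ × ℝ → ℝ :=
  fun p => ∑ μ, A (X p) μ * η p μ j

lemma algebra_key {n : ℕ} (a d : Fin n → Fin n → ℝ) (c : Fin n → Fin n → Fin n → ℝ)
    (e : Fin n → Fin 2 → ℝ) (Av W1 : Fin n → ℝ) :
    (∑ μ, ∑ ν, (∑ lam, (a lam ν * d μ lam - a lam μ * d ν lam - Av lam * c lam μ ν))
        * e μ 0 * e ν 1)
    = (∑ μ, ((∑ lam, d μ lam * -(∑ ν, a lam ν * e ν 0)) * e μ 1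
          + Av μ * (W1 μ - ∑ x, ∑ y, c μ x y * e x 0 * e y 1)))
      - ∑ μ, ((∑ lam, d μ lam * -(∑ ν, a lam ν * e ν 1)) * e μ 0 + Av μ * W1 μ) := by
  have T1 : (∑ μ, ∑ ν, (∑ lam, a lam ν * d μ lam) * e μ 0 * e ν 1)
      = ∑ μ, (∑ lam, d μ lam * (∑ ν, a lam ν * e ν 1)) * e μ 0 := by
    refine Finset.sum_congr rfl fun μ _ => ?_
    calc (∑ ν, (∑ lam, a lam ν * d μ lam) * e μ 0 * e ν 1)
        = ∑ ν, ∑ lam, a lam ν * d μ lam * e μ 0 * e ν 1 := by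
          refine Finset.sum_congr rfl fun ν _ => ?_
          rw [Finset.sum_mul, Finset.sum_mul]
      _ = ∑ lam, ∑ ν, a lam ν * d μ lam * e μ 0 * e ν 1 := Finset.sum_comm
      _ = (∑ lam, d μ lam * (∑ ν, a lam ν * e ν 1)) * e μ 0 := by
          rw [Finset.sum_mul]
          refine Finset.sum_congr rfl fun lam _ => ?_
          rw [Finset.mul_sum, Finset.sum_mul]
          exact Finset.sum_congr rfl fun ν _ => by ring
  have T2 : (∑ μ, ∑ ν, (∑ lam, a lam μ * d ν lam) * e μ 0 * e ν 1)
      = ∑ μ, (∑ lam, d μ lam * (∑ ν, a lam ν * e ν 0)) * e μ 1 := by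
    have := sum3_cyc (fun μ ν lam => a lam μ * d ν lam * e μ 0 * e ν 1)
    calc (∑ μ, ∑ ν, (∑ lam, a lam μ * d ν lam) * e μ 0 * e ν 1)
        = ∑ μ, ∑ ν, ∑ lam, a lam μ * d ν lam * e μ 0 * e ν 1 := by
          refine Finset.sum_congr rfl fun μ _ => Finset.sum_congr rfl fun ν _ => ?_
          rw [Finset.sum_mul, Finset.sum_mul]
      _ = ∑ ν, ∑ lam, ∑ μ, a lam μ * d ν lam * e μ 0 * e ν 1 := this
      _ = ∑ μ, (∑ lam, d μ lam * (∑ ν, a lam ν * e ν 0)) * e μ 1 := by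
          refine Finset.sum_congr rfl fun μ _ => ?_
          rw [Finset.sum_mul]
          refine Finset.sum_congr rfl fun lam _ => ?_
          rw [Finset.mul_sum, Finset.sum_mul]
          exact Finset.sum_congr rfl fun ν _ => by ring
  have T3 : (∑ μ, ∑ ν, (∑ lam, Av lam * c lam μ ν) * e μ 0 * e ν 1)
      = ∑ μ, Av μ * (∑ x, ∑ y, c μ x y * e x 0 * e y 1) := by
    have := sum3_cyc2 (fun μ ν lam => Av lam * c lam μ ν * e μ 0 * e ν 1)
    calc (∑ μ, ∑ ν, (∑ lam, Av lam * c lam μ ν) * e μ 0 * e ν 1)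
        = ∑ μ, ∑ ν, ∑ lam, Av lam * c lam μ ν * e μ 0 * e ν 1 := by
          refine Finset.sum_congr rfl fun μ _ => Finset.sum_congr rfl fun ν _ => ?_
          rw [Finset.sum_mul, Finset.sum_mul]
      _ = ∑ lam, ∑ μ, ∑ ν, Av lam * c lam μ ν * e μ 0 * e ν 1 := this
      _ = ∑ μ, Av μ * (∑ x, ∑ y, c μ x y * e x 0 * e y 1) := by
          refine Finset.sum_congr rfl fun lam _ => ?_
          rw [Finset.mul_sum]
          refine Finset.sum_congr rfl fun x _ => ?_
          rw [Finset.mul_sum]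
          exact Finset.sum_congr rfl fun y _ => by ring
  have expand : (∑ μ, ∑ ν, (∑ lam, (a lam ν * d μ lam - a lam μ * d ν lam - Av lam * c lam μ ν))
        * e μ 0 * e ν 1)
      = (∑ μ, ∑ ν, (∑ lam, a lam ν * d μ lam) * e μ 0 * e ν 1)
        - (∑ μ, ∑ ν, (∑ lam, a lam μ * d ν lam) * e μ 0 * e ν 1)
        - (∑ μ, ∑ ν, (∑ lam, Av lam * c lam μ ν) * e μ 0 * e ν 1) := by
    simp only [← Finset.sum_sub_distrib]
    refine Finset.sum_congr rfl fun μ _ => Finset.sum_congr rfl fun ν _ => ?_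
    rw [Finset.sum_sub_distrib, Finset.sum_sub_distrib]
    ring
  rw [expand, T1, T2, T3]
  simp only [mul_neg, mul_sub, neg_mul, Finset.sum_neg_distrib, Finset.sum_sub_distrib,
    Finset.sum_add_distrib, sub_neg_eq_add]
  ring

/-- For a solution `(X,η)` of the Poisson sigma model on an open
neighborhood of the closed unit square `Q = [0,1]²` satisfying the tangential boundary
conditions on `Q`, and any smooth vector field `A`, the integral over `Q` of the
contraction of the Schouten bracket `[α,A]` with `η ∧ η` vanishes. -/
theorem stmt3 {n : ℕ} (hn : 1 ≤ n)
    (α : (Fin n → ℝ) → Fin n → Fin n → ℝ) (hα : ContDiff ℝ (⊤ : ℕ∞) α)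
    (hskew : ∀ x μ ν, α x μ ν = - α x ν μ)
    (U : Set (ℝ × ℝ)) (hU : IsOpen U)
    (hQU : Set.Icc (0:ℝ) 1 ×ˢ Set.Icc (0:ℝ) 1 ⊆ U)
    (X : ℝ × ℝ → Fin n → ℝ) (η : ℝ × ℝ → Fin n → Fin 2 → ℝ)
    (hX : ContDiffOn ℝ (⊤ : ℕ∞) X U) (hη : ContDiffOn ℝ (⊤ : ℕ∞) η U)
    (hE1 : ∀ p ∈ U, ∀ i : Fin 2, ∀ μ,
      pd i (fun q => X q μ) p + ∑ ν, α (X p) μ ν * η p ν i = 0)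
    (hE2 : ∀ p ∈ U, ∀ ρ,
      pd 0 (fun q => η q ρ 1) p - pd 1 (fun q => η q ρ 0) p
        + ∑ μ, ∑ ν, pdn ρ (fun x => α x μ ν) (X p) * η p μ 0 * η p ν 1 = 0)
    (hbd1 : ∀ μ, ∀ t ∈ Set.Icc (0:ℝ) 1, η (t, 0) μ 0 = 0 ∧ η (t, 1) μ 0 = 0)
    (hbd2 : ∀ μ, ∀ t ∈ Set.Icc (0:ℝ) 1, η (0, t) μ 1 = 0 ∧ η (1, t) μ 1 = 0)
    (A : (Fin n → ℝ) → Fin n → ℝ) (hA : ContDiff ℝ (⊤ : ℕ∞) A) :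
    ∫ u in Set.Icc (0:ℝ) 1 ×ˢ Set.Icc (0:ℝ) 1,
      (∑ μ, ∑ ν, (∑ lam, (α (X u) lam ν * pdn lam (fun x => A x μ) (X u)
          - α (X u) lam μ * pdn lam (fun x => A x ν) (X u)
          - A (X u) lam * pdn lam (fun x => α x μ ν) (X u)))
        * η u μ 0 * η u ν 1) = 0 := by
  classical
  set s : Set ℝ := Set.Icc (0:ℝ) 1 with hs
  have hone : (1 : WithTop ℕ∞) ≤ ((⊤ : ℕ∞) : WithTop ℕ∞) := by exact_mod_cast le_top
  -- component smoothness
  have hAcomp : ∀ μ, ContDiff ℝ (⊤ : ℕ∞) (fun x => A x μ) := fun μ =>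
    (ContinuousLinearMap.proj μ : ((Fin n → ℝ)) →L[ℝ] ℝ).contDiff.comp hA
  have hηcomp : ∀ μ i, ContDiffOn ℝ (⊤ : ℕ∞) (fun q => η q μ i) U := fun μ i =>
    (((ContinuousLinearMap.proj i : ((Fin 2 → ℝ)) →L[ℝ] ℝ).contDiff).comp
      ((ContinuousLinearMap.proj μ : ((Fin n → Fin 2 → ℝ)) →L[ℝ] (Fin 2 → ℝ)).contDiff)).comp_contDiffOn hη
  have hg : ∀ j, ContDiffOn ℝ (⊤ : ℕ∞) (gfun A X η j) U := by
    intro j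
    refine ContDiffOn.sum fun μ _ => ContDiffOn.mul ?_ (hηcomp μ j)
    exact (hAcomp μ).comp_contDiffOn hX
  -- pointwise identity
  have key : ∀ p ∈ U,
      (∑ μ, ∑ ν, (∑ lam, (α (X p) lam ν * pdn lam (fun x => A x μ) (X p)
          - α (X p) lam μ * pdn lam (fun x => A x ν) (X p)
          - A (X p) lam * pdn lam (fun x => α x μ ν) (X p)))
        * η p μ 0 * η p ν 1)
      = pd 0 (gfun A X η 1) p - pd 1 (gfun A X η 0) p := by
    intro p hp
    have hUn : U ∈ nhds p := hU.mem_nhds hp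
    have dX : DifferentiableAt ℝ X p :=
      ((hX.differentiableOn (by simp)).differentiableAt hUn)
    have dη : ∀ μ i, DifferentiableAt ℝ (fun q => η q μ i) p := fun μ i =>
      (((hηcomp μ i).differentiableOn (by simp)).differentiableAt hUn)
    have dA' : ∀ μ, DifferentiableAt ℝ (fun x => A x μ) (X p) := fun μ =>
      ((hAcomp μ).differentiable (by simp)).differentiableAt
    have dAX : ∀ μ, DifferentiableAt ℝ (fun q => A (X q) μ) p := fun μ =>
      (dA' μ).comp p dX
    have hpd : ∀ j : Fin 2, pd j (gfun A X η 1) p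
        = ∑ μ, ((∑ lam, pdn lam (fun x => A x μ) (X p) * pd j (fun q => X q lam) p) * η p μ 1
            + A (X p) μ * pd j (fun q => η q μ 1) p) := by
      intro j
      have h0 : pd j (gfun A X η 1) p = ∑ μ, pd j (fun q => A (X q) μ * η q μ 1) p :=
        pd_sum Finset.univ (fun μ q => A (X q) μ * η q μ 1) p j
          (fun μ _ => (dAX μ).mul (dη μ 1))
      rw [h0]
      refine Finset.sum_congr rfl fun μ _ => ?_
      rw [pd_mul _ _ _ _ (dAX μ) (dη μ 1),
        pd_comp (fun x => A x μ) X p j (dA' μ) dX]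
    have hpd' : ∀ j : Fin 2, pd j (gfun A X η 0) p
        = ∑ μ, ((∑ lam, pdn lam (fun x => A x μ) (X p) * pd j (fun q => X q lam) p) * η p μ 0
            + A (X p) μ * pd j (fun q => η q μ 0) p) := by
      intro j
      have h0 : pd j (gfun A X η 0) p = ∑ μ, pd j (fun q => A (X q) μ * η q μ 0) p :=
        pd_sum Finset.univ (fun μ q => A (X q) μ * η q μ 0) p j
          (fun μ _ => (dAX μ).mul (dη μ 0))
      rw [h0]
      refine Finset.sum_congr rfl fun μ _ => ?_
      rw [pd_mul _ _ _ _ (dAX μ) (dη μ 0),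
        pd_comp (fun x => A x μ) X p j (dA' μ) dX]
    have e1 : ∀ (i : Fin 2) (lam : Fin n),
        pd i (fun q => X q lam) p = -∑ ν, α (X p) lam ν * η p ν i := by
      intro i lam
      have h := hE1 p hp i lam
      linarith
    have e2' : ∀ ρ, pd 0 (fun q => η q ρ 1) p
        = pd 1 (fun q => η q ρ 0) p
          - ∑ μ, ∑ ν, pdn ρ (fun x => α x μ ν) (X p) * η p μ 0 * η p ν 1 := by
      intro ρ
      have h := hE2 p hp ρ
      linarith
    rw [hpd 0, hpd' 1]
    simp only [e1, e2']
    exact algebra_key (α (X p)) (fun μ lam => pdn lam (fun x => A x μ) (X p))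
      (fun ρ μ ν => pdn ρ (fun x => α x μ ν) (X p)) (η p) (A (X p))
      (fun ρ => pd 1 (fun q => η q ρ 0) p)
  -- now the integral part
  have hQc : IsCompact (s ×ˢ s) := isCompact_Icc.prod isCompact_Icc
  have hQm : MeasurableSet (s ×ˢ s) := measurableSet_Icc.prod measurableSet_Icc
  have hpdc : ∀ i j : Fin 2, ContinuousOn (pd i (gfun A X η j)) U := by
    intro i j
    have h1 : ContinuousOn (fun p => fderiv ℝ (gfun A X η j) p) U :=
      (hg j).continuousOn_fderiv_of_isOpen hU hone
    exact h1.clm_apply continuousOn_const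
  have hint : ∀ i j : Fin 2, IntegrableOn (pd i (gfun A X η j)) (s ×ˢ s) := fun i j =>
    ((hpdc i j).mono hQU).integrableOn_compact hQc
  have hIeq : (∫ u in s ×ˢ s,
      (∑ μ, ∑ ν, (∑ lam, (α (X u) lam ν * pdn lam (fun x => A x μ) (X u)
          - α (X u) lam μ * pdn lam (fun x => A x ν) (X u)
          - A (X u) lam * pdn lam (fun x => α x μ ν) (X u)))
        * η u μ 0 * η u ν 1))
      = ∫ u in s ×ˢ s, (pd 0 (gfun A X η 1) u - pd 1 (gfun A X η 0) u) :=
    setIntegral_congr_fun hQm (fun p hp => key p (hQU hp))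
  rw [hIeq, integral_sub (hint 0 1) (hint 1 0)]
  have hdiffg : ∀ j : Fin 2, ∀ p ∈ U, DifferentiableAt ℝ (gfun A X η j) p := fun j p hp =>
    ((hg j).differentiableOn (by simp)).differentiableAt (hU.mem_nhds hp)
  have huicc : Set.uIcc (0:ℝ) 1 = s := Set.uIcc_of_le zero_le_one
  have h20 : (∫ u in s ×ˢ s, pd 0 (gfun A X η 1) u) = 0 := by
    have hf' : Integrable (pd 0 (gfun A X η 1))
        ((volume.restrict s).prod (volume.restrict s)) := by
      rw [Measure.prod_restrict, ← Measure.volume_eq_prod]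
      exact hint 0 1
    have hswap : (∫ u in s ×ˢ s, pd 0 (gfun A X η 1) u)
        = ∫ y in s, ∫ x in s, pd 0 (gfun A X η 1) (x, y) := by
      rw [Measure.volume_eq_prod, ← Measure.prod_restrict]
      exact integral_prod_symm _ hf'
    have inner : ∀ y ∈ s, (∫ x in s, pd 0 (gfun A X η 1) (x, y)) = 0 := by
      intro y hy
      have hmemU : ∀ x ∈ Set.uIcc (0:ℝ) 1, (x, y) ∈ U := fun x hx =>
        hQU (Set.mk_mem_prod (huicc ▸ hx) hy)
      have hderiv : ∀ x ∈ Set.uIcc (0:ℝ) 1,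
          HasDerivAt (fun t => gfun A X η 1 (t, y)) (pd 0 (gfun A X η 1) (x, y)) x :=
        fun x hx => hasDerivAt_pd0 _ x y (hdiffg 1 (x, y) (hmemU x hx))
      have hcxy : Continuous fun x : ℝ => (x, y) := continuous_id.prodMk continuous_const
      have hcont : ContinuousOn (fun x => pd 0 (gfun A X η 1) (x, y)) (Set.uIcc (0:ℝ) 1) :=
        (hpdc 0 1).comp hcxy.continuousOn (fun x hx => hmemU x hx)
      have hftc : (∫ x in (0:ℝ)..1, pd 0 (gfun A X η 1) (x, y))
          = gfun A X η 1 (1, y) - gfun A X η 1 (0, y) :=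
        intervalIntegral.integral_eq_sub_of_hasDerivAt hderiv hcont.intervalIntegrable
      have hb1 : gfun A X η 1 (1, y) = 0 :=
        Finset.sum_eq_zero fun μ _ => by rw [(hbd2 μ y hy).2, mul_zero]
      have hb0 : gfun A X η 1 (0, y) = 0 :=
        Finset.sum_eq_zero fun μ _ => by rw [(hbd2 μ y hy).1, mul_zero]
      calc (∫ x in s, pd 0 (gfun A X η 1) (x, y))
          = ∫ x in Set.Ioc (0:ℝ) 1, pd 0 (gfun A X η 1) (x, y) := by
            rw [hs]; exact integral_Icc_eq_integral_Ioc
        _ = ∫ x in (0:ℝ)..1, pd 0 (gfun A X η 1) (x, y) :=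
            (intervalIntegral.integral_of_le zero_le_one).symm
        _ = 0 := by rw [hftc, hb1, hb0, sub_zero]
    rw [hswap, setIntegral_congr_fun measurableSet_Icc inner, integral_zero]
  have h10 : (∫ u in s ×ˢ s, pd 1 (gfun A X η 0) u) = 0 := by
    have hf' : Integrable (pd 1 (gfun A X η 0))
        ((volume.restrict s).prod (volume.restrict s)) := by
      rw [Measure.prod_restrict, ← Measure.volume_eq_prod]
      exact hint 1 0
    have hswap : (∫ u in s ×ˢ s, pd 1 (gfun A X η 0) u)
        = ∫ x in s, ∫ y in s, pd 1 (gfun A X η 0) (x, y) := by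
      rw [Measure.volume_eq_prod, ← Measure.prod_restrict]
      exact integral_prod _ hf'
    have inner : ∀ x ∈ s, (∫ y in s, pd 1 (gfun A X η 0) (x, y)) = 0 := by
      intro x hx
      have hmemU : ∀ y ∈ Set.uIcc (0:ℝ) 1, (x, y) ∈ U := fun y hy =>
        hQU (Set.mk_mem_prod hx (huicc ▸ hy))
      have hderiv : ∀ y ∈ Set.uIcc (0:ℝ) 1,
          HasDerivAt (fun t => gfun A X η 0 (x, t)) (pd 1 (gfun A X η 0) (x, y)) y :=
        fun y hy => hasDerivAt_pd1 _ x y (hdiffg 0 (x, y) (hmemU y hy))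
      have hcxy : Continuous fun y : ℝ => (x, y) := continuous_const.prodMk continuous_id
      have hcont : ContinuousOn (fun y => pd 1 (gfun A X η 0) (x, y)) (Set.uIcc (0:ℝ) 1) :=
        (hpdc 1 0).comp hcxy.continuousOn (fun y hy => hmemU y hy)
      have hftc : (∫ y in (0:ℝ)..1, pd 1 (gfun A X η 0) (x, y))
          = gfun A X η 0 (x, 1) - gfun A X η 0 (x, 0) :=
        intervalIntegral.integral_eq_sub_of_hasDerivAt hderiv hcont.intervalIntegrable
      have hb1 : gfun A X η 0 (x, 1) = 0 :=
        Finset.sum_eq_zero fun μ _ => by rw [(hbd1 μ x hx).2, mul_zero]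
      have hb0 : gfun A X η 0 (x, 0) = 0 :=
        Finset.sum_eq_zero fun μ _ => by rw [(hbd1 μ x hx).1, mul_zero]
      calc (∫ y in s, pd 1 (gfun A X η 0) (x, y))
          = ∫ y in Set.Ioc (0:ℝ) 1, pd 1 (gfun A X η 0) (x, y) := by
            rw [hs]; exact integral_Icc_eq_integral_Ioc
        _ = ∫ y in (0:ℝ)..1, pd 1 (gfun A X η 0) (x, y) :=
            (intervalIntegral.integral_of_le zero_le_one).symm
        _ = 0 := by rw [hftc, hb1, hb0, sub_zero]
    rw [hswap, setIntegral_congr_fun measurableSet_Icc inner, integral_zero]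
  rw [h20, h10, sub_zero]
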